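/- arXiv:1903.09231 — 2 statements merged into one kernel-verified Lean document; each statement's English description precedes it below -/
import Mathlib

section
/- Let z and w be unit vectors in ℝ^d with angle α₁ = arccos(zᵀw) ∈ (0, π/2). Apply a perturbation Δz = ε₁(sin(α₁)v₁ − cos(α₁)v₂) + ε₂v₃, where v₁ = w, v₂ is the unit vector in span(w,z) orthogonal to v₁ with z = cos(α₁)v₁ + sin(α₁)v₂, and v₃ ⊥ v₁, v₂ is a unit vector. If ε₁ ≥ ε and ‖Δz‖ ≤ ε√d with ε = 0.1 sin(α₁)/d and d ≥ 2, then the new angle α₁' between w and (z + Δz)/‖z + Δz‖ satisfies cos(α₁') ≥ cos(α₁) + 0.8 ε sin(α₁). -/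
open scoped RealInnerProductSpace


private lemma aux_sqrt_bound (D n e : ℝ) (hDnn : 0 ≤ D) (hD2 : D ^ 2 = 1 + n ^ 2)
    (hne : n ^ 2 ≤ e) : D ≤ 1 + e / 2 := by
  have he : 0 ≤ e := le_trans (sq_nonneg n) hne
  nlinarith [sq_nonneg e, sq_nonneg (D - (1 + e / 2)), sq_nonneg (D + (1 + e / 2))]

private lemma aux_key (c s e e1 dd D : ℝ) (hc0 : 0 < c) (hc1 : c ≤ 1) (hs0 : 0 < s)
    (hs1 : s ≤ 1) (hdd : 2 ≤ dd) (he : 0 < e) (hed : e * dd = 0.1 * s) (he1 : e ≤ e1)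
    (hD1 : 1 ≤ D) (hDle : D ≤ 1 + e ^ 2 * dd / 2) :
    (c + 0.8 * e * s) * D ≤ c + e1 * s := by
  have hes : e ≤ 0.05 := by nlinarith
  have hLpos : (0:ℝ) < c + 0.8 * e * s := by positivity
  have key : (c + 0.8 * e * s) * (1 + e ^ 2 * dd / 2) ≤ c + e * s := by
    nlinarith [mul_pos he hs0, sq_nonneg e, mul_nonneg (mul_nonneg he.le hs0.le) he.le]
  calc (c + 0.8 * e * s) * D ≤ (c + 0.8 * e * s) * (1 + e ^ 2 * dd / 2) :=
        mul_le_mul_of_nonneg_left hDle hLpos.le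
    _ ≤ c + e * s := key
    _ ≤ c + e1 * s := by nlinarith

/-- A random-perturbation step decreases the angle: if `z, w` are unit vectors at angle
`α₁ ∈ (0, π/2)`, `Δz = ε₁(sin α₁ · v₁ − cos α₁ · v₂) + ε₂ v₃` with `v₁ = w`,
`z = cos α₁ · v₁ + sin α₁ · v₂`, `v₃ ⊥ v₁, v₂`, and if `ε₁ ≥ ε` and `‖Δz‖ ≤ ε √d` for
`ε = 0.1 sin α₁ / d`, `d ≥ 2`, then the cosine of the new angle satisfies
`cos α₁' = ⟪w, z + Δz⟫ / ‖z + Δz‖ ≥ cos α₁ + 0.8 ε sin α₁`. -/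
theorem perturbation_decreases_angle (d : ℕ) (hd : 2 ≤ d)
    (z w v₂ v₃ : EuclideanSpace ℝ (Fin d))
    (hz : ‖z‖ = 1) (hw : ‖w‖ = 1) (hv₂ : ‖v₂‖ = 1) (hv₃ : ‖v₃‖ = 1)
    (α₁ : ℝ) (hα₁ : α₁ ∈ Set.Ioo 0 (Real.pi / 2))
    (hwv₂ : ⟪w, v₂⟫ = 0) (hwv₃ : ⟪w, v₃⟫ = 0) (hv₂v₃ : ⟪v₂, v₃⟫ = 0)
    (hzdecomp : z = Real.cos α₁ • w + Real.sin α₁ • v₂)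
    (ε₁ ε₂ ε : ℝ) (hε : ε = 0.1 * Real.sin α₁ / d)
    (Δz : EuclideanSpace ℝ (Fin d))
    (hΔz : Δz = ε₁ • (Real.sin α₁ • w - Real.cos α₁ • v₂) + ε₂ • v₃)
    (hε₁ : ε ≤ ε₁) (hΔznorm : ‖Δz‖ ≤ ε * Real.sqrt d) :
    Real.cos α₁ + 0.8 * ε * Real.sin α₁ ≤ ⟪w, z + Δz⟫ / ‖z + Δz‖ := by
  obtain ⟨hα0, hαpi⟩ := hα₁
  have hsin : 0 < Real.sin α₁ := Real.sin_pos_of_pos_of_lt_pi hα0 (lt_trans hαpi (by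
    have := Real.pi_pos; linarith))
  have hsin1 : Real.sin α₁ ≤ 1 := Real.sin_le_one _
  have hcos : 0 < Real.cos α₁ := Real.cos_pos_of_mem_Ioo ⟨by linarith [Real.pi_pos], hαpi⟩
  have hcos1 : Real.cos α₁ ≤ 1 := Real.cos_le_one _
  have hdR : (2:ℝ) ≤ (d:ℝ) := by exact_mod_cast hd
  have hdpos : (0:ℝ) < d := by linarith
  have hεpos : 0 < ε := by rw [hε]; positivity
  have hεd : ε * d = 0.1 * Real.sin α₁ := by
    rw [hε]; field_simp
  have hww : ⟪w, w⟫ = 1 := by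
    rw [real_inner_self_eq_norm_sq, hw]; norm_num
  have hv₂v₂ : ⟪v₂, v₂⟫ = 1 := by
    rw [real_inner_self_eq_norm_sq, hv₂]; norm_num
  have hv₂w : ⟪v₂, w⟫ = 0 := by rw [real_inner_comm]; exact hwv₂
  have hv₂v₃' : ⟪v₂, v₃⟫ = 0 := hv₂v₃
  have hN : ⟪w, z + Δz⟫ = Real.cos α₁ + ε₁ * Real.sin α₁ := by
    rw [hzdecomp, hΔz]
    simp only [inner_add_right, inner_sub_right, real_inner_smul_right, hww, hwv₂, hwv₃]
    ring
  have hzΔ : ⟪z, Δz⟫ = 0 := by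
    rw [hzdecomp, hΔz]
    simp only [inner_add_left, inner_add_right, inner_sub_right, real_inner_smul_left,
      real_inner_smul_right, hww, hwv₂, hwv₃, hv₂w, hv₂v₂, hv₂v₃]
    ring
  have hD2 : ‖z + Δz‖ ^ 2 = 1 + ‖Δz‖ ^ 2 := by
    rw [norm_add_sq_real, hz, hzΔ]; ring
  have hΔ2 : ‖Δz‖ ^ 2 ≤ ε ^ 2 * d := by
    have h1 : ‖Δz‖ ^ 2 ≤ (ε * Real.sqrt d) ^ 2 := by
      apply sq_le_sq' _ hΔznorm
      linarith [norm_nonneg Δz, mul_nonneg hεpos.le (Real.sqrt_nonneg (d:ℝ))]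
    calc ‖Δz‖ ^ 2 ≤ (ε * Real.sqrt d) ^ 2 := h1
      _ = ε ^ 2 * d := by rw [mul_pow, Real.sq_sqrt hdpos.le]
  have hDle : ‖z + Δz‖ ≤ 1 + ε ^ 2 * d / 2 := by
    have := aux_sqrt_bound ‖z + Δz‖ ‖Δz‖ (ε ^ 2 * d) (norm_nonneg _) hD2 hΔ2
    linarith
  have hD1 : (1:ℝ) ≤ ‖z + Δz‖ := by
    have h := hD2
    nlinarith [sq_nonneg (‖Δz‖ : ℝ), norm_nonneg (z + Δz)]
  have hDpos : (0:ℝ) < ‖z + Δz‖ := by linarith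
  rw [le_div_iff₀ hDpos, hN]
  exact aux_key (Real.cos α₁) (Real.sin α₁) ε ε₁ d ‖z + Δz‖ hcos hcos1 hsin hsin1
    hdR hεpos hεd hε₁ hD1 hDle
end

section
/- Consider maximizing F(z) = Σᵢ cᵢ zᵢ^l over the unit sphere ‖z‖ = 1 in ℝⁿ, where all cᵢ > 0 and l ≥ 4 is even. Then every point z satisfying the first-order KKT condition (l cᵢ zᵢ^{l−1} = 2λ zᵢ for all i, with λ the Lagrange multiplier) and the second-order condition (wᵀ(∇²F(z) − 2λI)w ≤ 0 for all w ⊥ z) has exactly one nonzero coordinate; i.e., the local maxima are exactly z = ±eᵢ. -/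
/-- For `F(z) = Σᵢ cᵢ zᵢ^l` on the unit sphere with all `cᵢ > 0` and even `l ≥ 4`: every
point satisfying the first-order KKT condition and the second-order condition (negative
semidefiniteness of `∇²F − 2λI` on the tangent space) has exactly one nonzero coordinate,
i.e. `z = ±eᵢ`. -/
theorem kkt_sphere_power_max (n : ℕ) (c : Fin n → ℝ) (hc : ∀ i, 0 < c i)
    (l : ℕ) (hl : 4 ≤ l) (hleven : Even l)
    (z : Fin n → ℝ) (hz : ∑ i, z i ^ 2 = 1) (lam : ℝ)
    (hfirst : ∀ i, (l : ℝ) * c i * z i ^ (l - 1) = 2 * lam * z i)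
    (hsecond : ∀ w : Fin n → ℝ, (∑ i, w i * z i) = 0 →
      (∑ i, (l : ℝ) * ((l : ℝ) - 1) * c i * z i ^ (l - 2) * w i ^ 2) -
        2 * lam * (∑ i, w i ^ 2) ≤ 0) :
    ∃ i, (z i = 1 ∨ z i = -1) ∧ ∀ j, j ≠ i → z j = 0 := by
  have hev2 : Even (l - 2) := by
    obtain ⟨k, hk⟩ := hleven
    exact ⟨k - 1, by omega⟩
  have hex : ∃ i, z i ≠ 0 := by
    by_contra h
    push_neg at h
    simp [h] at hz
  obtain ⟨i, hi⟩ := hex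
  have hkey : ∀ j, z j ≠ 0 → 2 * lam = (l : ℝ) * c j * z j ^ (l - 2) := by
    intro j hj
    have h1 := hfirst j
    have h2 : z j ^ (l - 1) = z j ^ (l - 2) * z j := by
      rw [← pow_succ]; congr 1; omega
    rw [h2] at h1
    have h3 : ((l : ℝ) * c j * z j ^ (l - 2)) * z j = (2 * lam) * z j := by
      linear_combination h1
    exact (mul_right_cancel₀ hj h3).symm
  have hlampos : 0 < 2 * lam := by
    rw [hkey i hi]
    have h0 := Even.pow_pos hev2 hi
    have hl0 : (0 : ℝ) < (l : ℝ) := by positivity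
    exact mul_pos (mul_pos hl0 (hc i)) h0
  have hzero : ∀ j, j ≠ i → z j = 0 := by
    intro j hji
    by_contra hj
    set w : Fin n → ℝ := fun k => if k = i then z j else if k = j then -z i else 0 with hw
    have hij : i ≠ j := fun h => hji h.symm
    have horth : (∑ k, w k * z k) = 0 := by
      rw [Fintype.sum_eq_add i j hij (f := fun k => w k * z k)
        (by intro x ⟨hxi, hxj⟩; simp [hw, hxi, hxj])]
      simp [hw, hij, hji]
      ring
    have hs := hsecond w horth
    have hsum1 : (∑ k, (l : ℝ) * ((l : ℝ) - 1) * c k * z k ^ (l - 2) * w k ^ 2)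
        = (l : ℝ) * ((l : ℝ) - 1) * c i * z i ^ (l - 2) * z j ^ 2
          + (l : ℝ) * ((l : ℝ) - 1) * c j * z j ^ (l - 2) * z i ^ 2 := by
      rw [Fintype.sum_eq_add i j hij
        (f := fun k => (l : ℝ) * ((l : ℝ) - 1) * c k * z k ^ (l - 2) * w k ^ 2)
        (by intro x ⟨hxi, hxj⟩; simp [hw, hxi, hxj])]
      simp [hw, hij, hji]
    have hsum2 : (∑ k, w k ^ 2) = z j ^ 2 + z i ^ 2 := by
      rw [Fintype.sum_eq_add i j hij (f := fun k => w k ^ 2)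
        (by intro x ⟨hxi, hxj⟩; simp [hw, hxi, hxj])]
      simp [hw, hij, hji]
    rw [hsum1, hsum2] at hs
    have hki : (l : ℝ) * c i * z i ^ (l - 2) = 2 * lam := (hkey i hi).symm
    have hkj : (l : ℝ) * c j * z j ^ (l - 2) = 2 * lam := (hkey j hj).symm
    have hl4 : (4 : ℝ) ≤ (l : ℝ) := by exact_mod_cast hl
    have hzi2 : 0 < z i ^ 2 := by positivity
    have hzj2 : 0 < z j ^ 2 := by positivity
    have e1 : (l : ℝ) * ((l : ℝ) - 1) * c i * z i ^ (l - 2) * z j ^ 2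
        = ((l : ℝ) - 1) * (2 * lam) * z j ^ 2 := by rw [← hki]; ring
    have e2 : (l : ℝ) * ((l : ℝ) - 1) * c j * z j ^ (l - 2) * z i ^ 2
        = ((l : ℝ) - 1) * (2 * lam) * z i ^ 2 := by rw [← hkj]; ring
    rw [e1, e2] at hs
    have hA : 0 < 2 * lam * (z j ^ 2 + z i ^ 2) :=
      mul_pos hlampos (add_pos hzj2 hzi2)
    nlinarith [hs, hA, hl4]
  have hzi : z i ^ 2 = 1 := by
    have : (∑ k, z k ^ 2) = z i ^ 2 := by
      rw [Finset.sum_eq_single i]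
      · intro b _ hb; rw [hzero b hb]; ring
      · intro h; exact absurd (Finset.mem_univ i) h
    rw [this] at hz
    exact hz
  refine ⟨i, ?_, hzero⟩
  have : (z i - 1) * (z i + 1) = 0 := by nlinarith
  rcases mul_eq_zero.mp this with h | h
  · left; linarith
  · right; linarith
end
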